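/- arXiv:2605.10010 — 7 statements merged into one kernel-verified Lean document; each statement's English description precedes it below -/
import Mathlib

section
/- Let G be a finite group, S ⊆ G a nonempty subset, and H_S the smallest normal subgroup of G such that [G,G] ⊆ H_S and S is contained in a single left coset of H_S. Fix k ≥ 1 and a finite set ι of variables. Consider an instance consisting of constraints C₁,…,C_m, where the j-th constraint is specified by coefficients a_j : {0,…,k−1} → G and an injective tuple of variable indices v_j : {0,…,k−1} → ι, and an assignment x : ι → G satisfies C_j if and only if a_j(0)·x(v_j(0))·a_j(1)·x(v_j(1))⋯a_j(k−1)·x(v_j(k−1)) ∈ S. If there exists an assignment x : ι → G satisfying all m constraints, then there exists an assignment y : ι → G satisfying at least (|S|/|H_S|)·m of the constraints. -/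
/-!
Start from an assignment `x` satisfying every constraint and shift it by a uniformly random
`h : ι → H`. Since `H` is normal, every shifted constraint value stays in the coset of `H`
containing `S`; since the variables of a constraint are distinct, the shift of its first
variable alone makes that value uniformly distributed over the coset. So each constraint is
satisfied by a `|S| / |H|` fraction of the shifts, and some shift does at least as well as
the average.
-/

open scoped Pointwise
open Finset

section
variable {G : Type*} [Group G] {H : Subgroup G} [H.Normal]

theorem card_filter_mul_mul_mem_of_mk_eq [DecidableEq G] [Fintype H] (S : Finset G) {A R : G}
    (hS : ∀ s ∈ S, (s : G ⧸ H) = ↑(A * R)) :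
    #{t : H | A * t * R ∈ S} = #S := by
  have hinj : Function.Injective fun t : H => A * t * R := fun t t' h => by simpa using h
  classical
  have hrange : ∀ s ∈ S, s ∈ Set.range fun t : H => A * t * R := by
    intro s hs
    have hmem : A⁻¹ * s * R⁻¹ ∈ H := by
      rw [Subgroup.Normal.mem_comm_iff ‹_›, ← mul_assoc, ← mul_inv_rev]
      exact QuotientGroup.eq.mp (hS s hs).symm
    exact ⟨⟨_, hmem⟩, by group⟩
  rw [← filter_true_of_mem hrange, ← card_preimage S _ hinj.injOn]
  congr 1
  ext t
  simp

theorem card_filter_mul_apply_mul_mem [DecidableEq G] {ι : Type*} [Fintype ι] [DecidableEq ι]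
    [Fintype H] (S : Finset G) (i₀ : ι) (A : G) {R : (ι → H) → G}
    (hR : ∀ h h' : ι → H, (∀ i ≠ i₀, h i = h' i) → R h = R h')
    (hS : ∀ h, ∀ s ∈ S, (s : G ⧸ H) = ↑(A * R h)) :
    #{h : ι → H | A * h i₀ * R h ∈ S} * Fintype.card H =
      #S * Fintype.card H ^ Fintype.card ι := by
  set e := Equiv.funSplitAt i₀ H
  have hsplit : ∀ t r,
      A * e.symm (t, r) i₀ * R (e.symm (t, r)) = A * t * R (e.symm (1, r)) := by
    intro t r
    congr 1
    · simp [e]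
    · exact hR _ _ fun i hi => by simp [e, hi]
  have hcount : #{h : ι → H | A * h i₀ * R h ∈ S} = ∑ r : {i // i ≠ i₀} → H, #S := by
    rw [card_filter, ← e.symm.sum_comp, Fintype.sum_prod_type_right]
    refine sum_congr rfl fun r _ => ?_
    simp only [hsplit, ← card_filter]
    exact card_filter_mul_mul_mem_of_mk_eq S (hS _)
  have hcard : Fintype.card ({i // i ≠ i₀} → H) * Fintype.card H =
      Fintype.card H ^ Fintype.card ι := by
    rw [mul_comm, ← Fintype.card_prod, ← Fintype.card_congr e, Fintype.card_fun]
  rw [hcount, sum_const, card_univ, smul_eq_mul, mul_right_comm, hcard, mul_comm]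

theorem mk_prod_ofFn_mul_mul_apply {ι : Type*} {n : ℕ} (a : Fin n → G) (v : Fin n → ι)
    (x : ι → G) (h : ι → H) :
    ((List.ofFn fun i => a i * (x (v i) * h (v i))).prod : G ⧸ H) =
      ↑(List.ofFn fun i => a i * x (v i)).prod := by
  simp only [← QuotientGroup.mk'_apply, map_list_prod, List.map_ofFn]
  congr 2
  funext i
  simp

theorem card_filter_prod_ofFn_mul_mem [DecidableEq G] {ι : Type*} [Fintype ι] [DecidableEq ι]
    [Fintype H] (S : Finset G) {k : ℕ} (a : Fin (k + 1) → G) {v : Fin (k + 1) → ι}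
    (hv : Function.Injective v) (x : ι → G)
    (hS : ∀ s ∈ S, (s : G ⧸ H) = ↑(List.ofFn fun i => a i * x (v i)).prod) :
    #{h : ι → H | (List.ofFn fun i => a i * (x (v i) * h (v i))).prod ∈ S} * Fintype.card H =
      #S * Fintype.card H ^ Fintype.card ι := by
  set R : (ι → H) → G := fun h =>
    (List.ofFn fun i : Fin k => a i.succ * (x (v i.succ) * h (v i.succ))).prod
  have hprod : ∀ h : ι → H, (List.ofFn fun i => a i * (x (v i) * h (v i))).prod =
      a 0 * x (v 0) * h (v 0) * R h := fun h => by
    simp only [List.ofFn_succ, List.prod_cons, R, mul_assoc]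
  simp only [hprod]
  refine card_filter_mul_apply_mul_mem S (v 0) _ (fun h h' hh => ?_) fun h s hs => ?_
  · simp only [R, hh _ (hv.ne (Fin.succ_ne_zero _))]
  · rw [hS s hs, List.ofFn_succ, List.prod_cons]
    simp only [R, QuotientGroup.mk_mul, mk_prod_ofFn_mul_mul_apply]

end

theorem exists_le_card_filter_of_le_card_filter {α β : Type*} [Fintype α] [Nonempty α]
    [Fintype β] (P : α → β → Prop) [∀ a b, Decidable (P a b)] {δ : ℝ}
    (hP : ∀ b, δ * Fintype.card α ≤ #{a | P a b}) :
    ∃ a, δ * Fintype.card β ≤ #{b | P a b} := by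
  have hsum : ∑ _a : α, δ * Fintype.card β ≤ ∑ a, (#{b | P a b} : ℝ) :=
    calc ∑ _a : α, δ * Fintype.card β = ∑ _b : β, δ * Fintype.card α := by
          simp only [sum_const, card_univ, nsmul_eq_mul]; ring
      _ ≤ ∑ b, (#{a | P a b} : ℝ) := sum_le_sum fun b _ => hP b
      _ = ∑ a, (#{b | P a b} : ℝ) := by
          exact_mod_cast (sum_card_bipartiteAbove_eq_sum_card_bipartiteBelow P).symm
  obtain ⟨a, -, ha⟩ := exists_le_of_sum_le univ_nonempty hsum
  exact ⟨a, ha⟩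

theorem stmt3_general {G : Type*} [Group G] [Fintype G] [DecidableEq G]
    (S : Finset G)
    (H : Subgroup G) [H.Normal]
    (hcoset : ∃ g : G, (S : Set G) ⊆ g • (H : Set G))
    (ι : Type*) [Fintype ι] (k m : ℕ) (hk : 1 ≤ k)
    (a : Fin m → Fin k → G) (v : Fin m → Fin k → ι)
    (hv : ∀ j, Function.Injective (v j))
    (hsat : ∃ x : ι → G, ∀ j : Fin m,
      (List.ofFn (fun i => a j i * x (v j i))).prod ∈ S) :
    ∃ y : ι → G,
      (S.card : ℝ) / (Nat.card H) * m ≤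
        (Finset.univ.filter (fun j : Fin m =>
          (List.ofFn (fun i => a j i * y (v j i))).prod ∈ S)).card := by
  classical
  obtain ⟨x, hx⟩ := hsat
  obtain ⟨g, hg⟩ := hcoset
  obtain ⟨k, rfl⟩ := Nat.exists_eq_add_of_le' hk
  have hmk : ∀ s ∈ S, (s : G ⧸ H) = g := fun s hs =>
    (QuotientGroup.eq.mpr (mem_leftCoset_iff g |>.mp (hg hs))).symm
  have hcount : ∀ j, (#S / Nat.card H : ℝ) * Fintype.card (ι → H) ≤
      #{h : ι → H | (List.ofFn fun i => a j i * (x (v j i) * h (v j i))).prod ∈ S} := by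
    intro j
    have hcard := card_filter_prod_ofFn_mul_mem S (a j) (hv j) x fun s hs =>
      (hmk s hs).trans (hmk _ (hx j)).symm
    rw [Nat.card_eq_fintype_card, Fintype.card_fun, div_mul_eq_mul_div,
      div_le_iff₀ (by exact_mod_cast Fintype.card_pos)]
    exact_mod_cast hcard.ge
  obtain ⟨h, hh⟩ := exists_le_card_filter_of_le_card_filter _ hcount
  exact ⟨fun i => x i * h i, by simpa using hh⟩

/-- Let `G` be a finite group, `S ⊆ G` nonempty, and `H` the smallest
normal subgroup of `G` with `[G,G] ⊆ H` and `S` contained in a single left coset of `H`.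
Given a satisfiable instance of `Max-Ek-LIN_S(G)` with `m` constraints (the `j`-th
constraint being `a j 0 * x (v j 0) * a j 1 * x (v j 1) * ⋯ ∈ S` with `v j` injective),
there is an assignment satisfying at least `(|S| / |H|) * m` constraints. -/
theorem stmt3 {G : Type*} [Group G] [Fintype G] [DecidableEq G]
    (S : Finset G) (hS : S.Nonempty)
    (H : Subgroup G) [H.Normal]
    (hcomm : commutator G ≤ H)
    (hcoset : ∃ g : G, (S : Set G) ⊆ g • (H : Set G))
    (hmin : ∀ N : Subgroup G, N.Normal → commutator G ≤ N →
      (∃ g : G, (S : Set G) ⊆ g • (N : Set G)) → H ≤ N)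
    (ι : Type*) [Fintype ι] (k m : ℕ) (hk : 1 ≤ k)
    (a : Fin m → Fin k → G) (v : Fin m → Fin k → ι)
    (hv : ∀ j, Function.Injective (v j))
    (hsat : ∃ x : ι → G, ∀ j : Fin m,
      (List.ofFn (fun i => a j i * x (v j i))).prod ∈ S) :
    ∃ y : ι → G,
      (S.card : ℝ) / (Nat.card H) * m ≤
        (Finset.univ.filter (fun j : Fin m =>
          (List.ofFn (fun i => a j i * y (v j i))).prod ∈ S)).card :=
  stmt3_general S H hcoset ι k m hk a v hv hsat
end

section
/- Let G be a finite group, n ≥ 1, and H a subgroup of G. Let ρ : G → ℂˣ be a group homomorphism such that ρ(h₀) ≠ 1 for some h₀ ∈ H, and let β₁,…,βₙ : G → ℂˣ be group homomorphisms with βᵢ(h) = 1 for every h ∈ H and every i. Let f : Gⁿ → G be a folded function. Then ∑_{x ∈ Gⁿ} ρ(f(x)) · ∏_{i=1}^{n} βᵢ(xᵢ) = 0. -/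
/-! Left translation of all coordinates by `c` permutes `Gⁿ`, multiplies `ρ ∘ f` by `ρ c`
(as `f` is folded) and fixes each `βᵢ(xᵢ)` when `c ∈ H`. Hence the sum `S` satisfies
`S = ρ(h₀) S` with `ρ(h₀) ≠ 1`, so `S = 0`. -/

open Finset

section

variable {G ι R : Type*} [Group G] [Fintype G] [Fintype ι] [DecidableEq ι] [CommRing R]

def IsFolded (f : (ι → G) → G) : Prop :=
  ∀ c : G, ∀ x : ι → G, f (fun i => c * x i) = c * f x

theorem sum_folded_mul_prod_eq_mul {f : (ι → G) → G} (hf : IsFolded f)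
    (ρ : G →* Rˣ) (β : ι → G →* Rˣ) {c : G} (hc : ∀ i, β i c = 1) :
    ∑ x : ι → G, (ρ (f x) : R) * ∏ i, (β i (x i) : R)
      = ρ c * ∑ x : ι → G, (ρ (f x) : R) * ∏ i, (β i (x i) : R) := by
  set F : (ι → G) → R := fun x => ρ (f x) * ∏ i, (β i (x i) : R)
  calc ∑ x, F x = ∑ x, F (fun i => c * x i) :=
        (Fintype.sum_equiv (Equiv.piCongrRight fun _ => Equiv.mulLeft c) _ _ fun _ => rfl).symm
    _ = ∑ x, ρ c * F x :=
        sum_congr rfl fun x _ => by simp only [F, hf c x, map_mul, hc, one_mul, Units.val_mul]; ring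
    _ = ρ c * ∑ x, F x := (mul_sum _ _ _).symm

theorem sum_folded_mul_prod_eq_zero [IsDomain R] {f : (ι → G) → G} (hf : IsFolded f)
    (ρ : G →* Rˣ) (β : ι → G →* Rˣ) {c : G} (hρ : ρ c ≠ 1) (hc : ∀ i, β i c = 1) :
    ∑ x : ι → G, (ρ (f x) : R) * ∏ i, (β i (x i) : R) = 0 :=
  (mul_left_eq_self₀.mp (sum_folded_mul_prod_eq_mul hf ρ β hc).symm).resolve_left
    (Units.val_eq_one.not.mpr hρ)

end

theorem stmt4_general {G : Type*} [Group G] [Fintype G] (n : ℕ)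
    (H : Subgroup G)
    (ρ : G →* ℂˣ) (hρ : ∃ h₀ ∈ H, ρ h₀ ≠ 1)
    (β : Fin n → (G →* ℂˣ)) (hβ : ∀ i : Fin n, ∀ h ∈ H, β i h = 1)
    (f : (Fin n → G) → G)
    (hf : ∀ c : G, ∀ x : Fin n → G, f (fun i => c * x i) = c * f x) :
    ∑ x : Fin n → G, (ρ (f x) : ℂ) * ∏ i : Fin n, (β i (x i) : ℂ) = 0 := by
  obtain ⟨h₀, hh₀, hρh₀⟩ := hρ
  exact sum_folded_mul_prod_eq_zero hf ρ β hρh₀ fun i => hβ i h₀ hh₀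

/-- Let `G` be a finite group, `n ≥ 1`, `H ≤ G`, `ρ : G → ℂˣ` a character
that is nontrivial on `H`, and `β₁, …, βₙ : G → ℂˣ` characters that are trivial on `H`.
For any folded `f : Gⁿ → G`, the sum `∑_{x ∈ Gⁿ} ρ(f(x)) ∏ᵢ βᵢ(xᵢ)` vanishes. -/
theorem stmt4 {G : Type*} [Group G] [Fintype G] (n : ℕ) (hn : 1 ≤ n)
    (H : Subgroup G)
    (ρ : G →* ℂˣ) (hρ : ∃ h₀ ∈ H, ρ h₀ ≠ 1)
    (β : Fin n → (G →* ℂˣ)) (hβ : ∀ i : Fin n, ∀ h ∈ H, β i h = 1)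
    (f : (Fin n → G) → G)
    (hf : ∀ c : G, ∀ x : Fin n → G, f (fun i => c * x i) = c * f x) :
    ∑ x : Fin n → G, (ρ (f x) : ℂ) * ∏ i : Fin n, (β i (x i) : ℂ) = 0 :=
  stmt4_general n H ρ hρ β hβ f hf
end

section
/- Let G be a finite group, n ≥ 1, and let ρ be an irreducible finite-dimensional complex representation of G on a vector space V with dim V ≥ 2. Let α₁,…,αₙ : G → ℂˣ be (possibly trivial) group homomorphisms, and let f : Gⁿ → G be a folded function. Then the linear-map-valued sum ∑_{x ∈ Gⁿ} (∏_{i=1}^{n} αᵢ(xᵢ)) · ρ(f(x)) equals 0. -/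
/-! Writing `T` for the sum and `β = ∏ αᵢ`, the substitution `x ↦ c⁻¹ • x` together with
foldedness of `f` gives `ρ(c) T = β(c⁻¹) T`. Hence the range of `T` is invariant, so by
irreducibility either `T = 0` or `T` is onto; in the latter case every `ρ(c)` is a scalar, so
every line of `V` is invariant, which is impossible when `dim V ≥ 2`. -/

open Module

section Irreducible

variable {G K V : Type*} [Group G] [Field K] [AddCommGroup V] [Module K V]
  {ρ : G →* Module.End K V}

theorem finrank_le_one_of_forall_eq_smul_one
    (hirr : ∀ W : Submodule K V, (∀ g : G, ∀ v ∈ W, ρ g v ∈ W) → W = ⊥ ∨ W = ⊤)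
    (hscalar : ∀ g, ∃ a : K, ρ g = a • 1) : finrank K V ≤ 1 := by
  nontriviality V
  obtain ⟨v, hv⟩ := exists_ne (0 : V)
  have hline : ∀ g, ∀ w ∈ K ∙ v, ρ g w ∈ K ∙ v := by
    intro g w hw
    obtain ⟨a, ha⟩ := hscalar g
    simpa [ha] using Submodule.smul_mem _ a hw
  rcases hirr _ hline with h | h
  · simp [hv] at h
  · rw [← finrank_top, ← h, finrank_span_singleton hv]

theorem eq_zero_of_forall_mul_eq_smul
    (hirr : ∀ W : Submodule K V, (∀ g : G, ∀ v ∈ W, ρ g v ∈ W) → W = ⊥ ∨ W = ⊤)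
    (hdim : 2 ≤ finrank K V) {T : Module.End K V} {β : G → K}
    (hT : ∀ g, ρ g * T = β g • T) : T = 0 := by
  have hrange : ∀ g, ∀ v ∈ LinearMap.range T, ρ g v ∈ LinearMap.range T := by
    rintro g _ ⟨u, rfl⟩
    refine ⟨β g • u, ?_⟩
    rw [map_smul, ← LinearMap.smul_apply, ← hT, Module.End.mul_apply]
  rcases hirr _ hrange with h | h
  · exact LinearMap.range_eq_bot.mp h
  · have hsurj := LinearMap.range_eq_top.mp h
    have hscalar : ∀ g, ∃ a : K, ρ g = a • 1 := fun g => ⟨β g, by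
      ext w
      obtain ⟨u, rfl⟩ := hsurj w
      simpa using LinearMap.congr_fun (hT g) u⟩
    have := finrank_le_one_of_forall_eq_smul_one hirr hscalar
    omega

end Irreducible

theorem mul_sum_folded_eq_smul {G R V ι : Type*} [Group G] [Fintype G]
    [Fintype ι] [DecidableEq ι] [CommSemiring R] [AddCommMonoid V] [Module R V]
    (ρ : G →* Module.End R V) (α : ι → G →* Rˣ) (f : (ι → G) → G)
    (hf : ∀ c : G, ∀ x : ι → G, f (fun i => c * x i) = c * f x) (c : G) :
    ρ c * ∑ x : ι → G, (∏ i, (α i (x i) : R)) • ρ (f x) =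
      (∏ i, (α i c⁻¹ : R)) • ∑ x : ι → G, (∏ i, (α i (x i) : R)) • ρ (f x) := by
  let shift : (ι → G) ≃ (ι → G) := Equiv.piCongrRight fun _ => Equiv.mulLeft c⁻¹
  calc ρ c * ∑ x : ι → G, (∏ i, (α i (x i) : R)) • ρ (f x)
      = ∑ x : ι → G, (∏ i, (α i (x i) : R)) • ρ (f fun i => c * x i) := by
        simp only [Finset.mul_sum, mul_smul_comm, ← map_mul, hf]
    _ = ∑ x : ι → G, (∏ i, (α i (shift x i) : R)) • ρ (f fun i => c * shift x i) :=
        (shift.sum_comp _).symm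
    _ = _ := by
        simp only [shift, Equiv.piCongrRight_apply, Equiv.coe_mulLeft, Pi.map_apply,
          mul_inv_cancel_left, map_mul, Units.val_mul, Finset.prod_mul_distrib, Finset.smul_sum,
          smul_smul]

theorem stmt5_general {G : Type*} [Group G] [Fintype G] (n : ℕ)
    {V : Type*} [AddCommGroup V] [Module ℂ V]
    (ρ : G →* (V →ₗ[ℂ] V))
    (hirr : ∀ W : Submodule ℂ V, (∀ g : G, ∀ v ∈ W, ρ g v ∈ W) → W = ⊥ ∨ W = ⊤)
    (hdim : 2 ≤ Module.finrank ℂ V)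
    (α : Fin n → (G →* ℂˣ))
    (f : (Fin n → G) → G)
    (hf : ∀ c : G, ∀ x : Fin n → G, f (fun i => c * x i) = c * f x) :
    ∑ x : Fin n → G, (∏ i : Fin n, (α i (x i) : ℂ)) • ρ (f x) = 0 :=
  eq_zero_of_forall_mul_eq_smul hirr hdim (mul_sum_folded_eq_smul ρ α f hf)

/-- Let `G` be a finite group, `n ≥ 1`, `ρ` an irreducible complex
representation of `G` on `V` with `dim V ≥ 2`, `α₁, …, αₙ : G → ℂˣ` characters, and
`f : Gⁿ → G` folded. Then `∑_{x ∈ Gⁿ} (∏ᵢ αᵢ(xᵢ)) • ρ(f(x)) = 0` as a linear map. -/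
theorem stmt5 {G : Type*} [Group G] [Fintype G] (n : ℕ) (hn : 1 ≤ n)
    {V : Type*} [AddCommGroup V] [Module ℂ V] [FiniteDimensional ℂ V]
    (ρ : G →* (V →ₗ[ℂ] V))
    (hirr : ∀ W : Submodule ℂ V, (∀ g : G, ∀ v ∈ W, ρ g v ∈ W) → W = ⊥ ∨ W = ⊤)
    (hdim : 2 ≤ Module.finrank ℂ V)
    (α : Fin n → (G →* ℂˣ))
    (f : (Fin n → G) → G)
    (hf : ∀ c : G, ∀ x : Fin n → G, f (fun i => c * x i) = c * f x) :
    ∑ x : Fin n → G, (∏ i : Fin n, (α i (x i) : ℂ)) • ρ (f x) = 0 :=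
  stmt5_general n ρ hirr hdim α f hf
end

section
/- Let G be a finite group. There exists a real number ε > 0, depending only on G, with the following property: for every nonempty subset S ⊆ G, letting H_S be the smallest normal subgroup of G such that [G,G] ⊆ H_S and S is contained in a single left coset of H_S, and for every group homomorphism β : G → ℂˣ for which there exists h ∈ H_S with β(h) ≠ 1, one has |∑_{s ∈ S} β(s⁻¹)| ≤ (1 − ε)·|S|. -/
/-!
The values of a character `β` of `G` are `|G|`-th roots of unity, and two distinct roots of
unity `z ≠ w` satisfy `‖z + w‖ < 2` by strict convexity; as there are finitely many of them,
`‖z + w‖ ≤ 2 - δ` for a uniform `δ > 0`. If `β(s⁻¹)` were constant on `S`, then `S` would lie in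
a single coset of `ker β`, a normal subgroup containing `[G, G]`, so minimality would give
`H_S ≤ ker β`. Hence two terms of the sum differ, and the sum loses at least `δ ≥ δ |S| / |G|`
against the trivial bound `|S|`.
-/

open scoped Pointwise
open Finset

theorem exists_pos_forall_norm_add_le_two_sub {E : Type*} [NormedAddCommGroup E]
    [NormedSpace ℝ E] [StrictConvexSpace ℝ E] (R : Finset E) (hR : ∀ z ∈ R, ‖z‖ = 1) :
    ∃ δ > 0, ∀ z ∈ R, ∀ w ∈ R, z ≠ w → ‖z + w‖ ≤ 2 - δ := by
  have hlt : ∀ p ∈ R ×ˢ R, p.1 ≠ p.2 → ‖p.1 + p.2‖ < 2 := by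
    intro p hp hne
    rw [mem_product] at hp
    have hnorm : ‖p.1‖ = ‖p.2‖ := (hR _ hp.1).trans (hR _ hp.2).symm
    calc ‖p.1 + p.2‖ < ‖p.1‖ + ‖p.2‖ :=
          norm_add_lt_of_not_sameRay ((not_sameRay_iff_of_norm_eq hnorm).2 hne)
      _ = 2 := by rw [hR _ hp.1, hR _ hp.2]; norm_num
  have hsmall : ∀ᶠ δ in nhdsWithin (0 : ℝ) (Set.Ioi 0),
      0 < δ ∧ ∀ p ∈ R ×ˢ R, p.1 ≠ p.2 → ‖p.1 + p.2‖ ≤ 2 - δ := by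
    refine eventually_mem_nhdsWithin.and (nhdsWithin_le_nhds ?_)
    refine (Filter.eventually_all_finset _).2 fun p hp =>
      Filter.eventually_imp_distrib_left.2 fun hne => ?_
    filter_upwards [eventually_lt_nhds (sub_pos.2 (hlt p hp hne))] with δ hδ
    linarith
  obtain ⟨δ, hδ, hgap⟩ := hsmall.exists
  exact ⟨δ, hδ, fun z hz w hw hne => hgap (z, w) (mem_product.2 ⟨hz, hw⟩) hne⟩

theorem norm_sum_le_card_sub_of_norm_add_le {ι E : Type*} [SeminormedAddCommGroup E]
    [DecidableEq ι] {S : Finset ι} {f : ι → E} (hf : ∀ i ∈ S, ‖f i‖ ≤ 1) {s t : ι}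
    (hs : s ∈ S) (ht : t ∈ S) (hst : s ≠ t) {δ : ℝ} (hpair : ‖f s + f t‖ ≤ 2 - δ) :
    ‖∑ i ∈ S, f i‖ ≤ #S - δ := by
  have hsub : {s, t} ⊆ S := insert_subset hs (singleton_subset_iff.2 ht)
  have hcard : (#(S \ {s, t}) : ℝ) + 2 = #S := by
    exact_mod_cast card_pair hst ▸ card_sdiff_add_card_eq_card hsub
  have hrest : ‖∑ i ∈ S \ {s, t}, f i‖ ≤ #(S \ {s, t}) := by
    simpa using norm_sum_le_of_le (S \ {s, t}) fun i hi => hf i (mem_sdiff.1 hi).1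
  calc ‖∑ i ∈ S, f i‖ = ‖∑ i ∈ S \ {s, t}, f i + (f s + f t)‖ := by
        rw [← sum_sdiff hsub, sum_pair hst]
    _ ≤ #(S \ {s, t}) + (2 - δ) := (norm_add_le _ _).trans (add_le_add hrest hpair)
    _ = #S - δ := by linarith

theorem MonoidHom.coe_mem_nthRootsFinset {G R : Type*} [Group G] [Fintype G] [CommRing R]
    [IsDomain R] (β : G →* Rˣ) (g : G) :
    (β g : R) ∈ Polynomial.nthRootsFinset (Fintype.card G) (1 : R) := by
  rw [Polynomial.mem_nthRootsFinset Fintype.card_pos, ← Units.val_pow_eq_pow_val, ← map_pow,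
    pow_card_eq_one, map_one, Units.val_one]

theorem exists_mem_map_ne_of_not_le_ker {G A : Type*} [Group G] [CommGroup A] {S : Set G}
    (s : G) {H : Subgroup G}
    (hmin : ∀ N : Subgroup G, N.Normal → commutator G ≤ N →
      (∃ g : G, S ⊆ g • (N : Set G)) → H ≤ N)
    (β : G →* A) (hβ : ¬H ≤ β.ker) : ∃ t ∈ S, β t ≠ β s := by
  by_contra! hconst
  refine hβ (hmin β.ker β.normal_ker (Abelianization.commutator_subset_ker β) ⟨s, ?_⟩)
  intro t ht
  rw [mem_leftCoset_iff, SetLike.mem_coe, MonoidHom.mem_ker, map_mul, map_inv, hconst t ht,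
    inv_mul_cancel]

theorem stmt7_general {G : Type*} [Group G] [Fintype G] :
    ∃ ε : ℝ, 0 < ε ∧
      ∀ S : Finset G, S.Nonempty →
        ∀ H : Subgroup G, H.Normal → commutator G ≤ H →
          (∃ g : G, (S : Set G) ⊆ g • (H : Set G)) →
          (∀ N : Subgroup G, N.Normal → commutator G ≤ N →
            (∃ g : G, (S : Set G) ⊆ g • (N : Set G)) → H ≤ N) →
          ∀ β : G →* ℂˣ, (∃ h ∈ H, β h ≠ 1) →
            ‖∑ s ∈ S, (β s⁻¹ : ℂ)‖ ≤ (1 - ε) * S.card := by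
  classical
  set n := Fintype.card G
  have hroot_norm : ∀ z ∈ Polynomial.nthRootsFinset n (1 : ℂ), ‖z‖ = 1 := fun z hz =>
    Complex.norm_eq_one_of_pow_eq_one ((Polynomial.mem_nthRootsFinset Fintype.card_pos _).1 hz)
      Fintype.card_ne_zero
  obtain ⟨δ, hδ, hgap⟩ := exists_pos_forall_norm_add_le_two_sub _ hroot_norm
  refine ⟨δ / n, by positivity, ?_⟩
  rintro S ⟨s, hs⟩ H - - - hmin β ⟨h, hH, hβh⟩
  obtain ⟨t, ht, hts⟩ := exists_mem_map_ne_of_not_le_ker s hmin β fun hle => hβh (hle hH)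
  have hval_ne : (β s⁻¹ : ℂ) ≠ β t⁻¹ := by
    simpa only [map_inv, ne_eq, Units.val_inj, inv_inj] using hts.symm
  have hval : ∀ g, (β g : ℂ) ∈ Polynomial.nthRootsFinset n (1 : ℂ) := β.coe_mem_nthRootsFinset
  have hsum : ‖∑ u ∈ S, (β u⁻¹ : ℂ)‖ ≤ #S - δ :=
    norm_sum_le_card_sub_of_norm_add_le (fun u _ => (hroot_norm _ (hval _)).le) hs ht
      (by rintro rfl; exact hval_ne rfl) (hgap _ (hval _) _ (hval _) hval_ne)
  have hSn : (#S : ℝ) ≤ n := by exact_mod_cast S.card_le_univ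
  have hn : (0 : ℝ) < n := by exact_mod_cast Fintype.card_pos
  calc ‖∑ u ∈ S, (β u⁻¹ : ℂ)‖ ≤ #S - δ := hsum
    _ ≤ #S - δ / n * #S := by
        gcongr
        exact (mul_le_mul_of_nonneg_left hSn (by positivity)).trans_eq (div_mul_cancel₀ _ hn.ne')
    _ = (1 - δ / n) * #S := by ring

/-- For every finite group `G` there is `ε > 0`, depending only on `G`,
such that for every nonempty `S ⊆ G`, with `H` the smallest normal subgroup of `G`
containing `[G,G]` such that `S` lies in a single left coset of `H`, and every character
`β : G → ℂˣ` that is nontrivial on `H`, one has `|∑_{s ∈ S} β(s⁻¹)| ≤ (1 - ε)|S|`. -/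
theorem stmt7 {G : Type*} [Group G] [Fintype G] [DecidableEq G] :
    ∃ ε : ℝ, 0 < ε ∧
      ∀ S : Finset G, S.Nonempty →
        ∀ H : Subgroup G, H.Normal → commutator G ≤ H →
          (∃ g : G, (S : Set G) ⊆ g • (H : Set G)) →
          (∀ N : Subgroup G, N.Normal → commutator G ≤ N →
            (∃ g : G, (S : Set G) ⊆ g • (N : Set G)) → H ≤ N) →
          ∀ β : G →* ℂˣ, (∃ h ∈ H, β h ≠ 1) →
            ‖∑ s ∈ S, (β s⁻¹ : ℂ)‖ ≤ (1 - ε) * S.card :=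
  stmt7_general
end

section
/- Let n ≥ 2 and let z₁,…,z_m ∈ ℂ satisfy zᵢⁿ = 1 for every i. If the zᵢ are not all equal, then |∑_{i=1}^{m} zᵢ| ≤ (m − 2) + |1 + e^{2πi/n}|. -/
open Complex
open scoped Real

/-!
Choose `zᵢ ≠ zⱼ`. The other `m - 2` terms have norm `1`, so by the triangle inequality
`‖∑ z‖ ≤ (m - 2) + ‖zᵢ + zⱼ‖`, and `‖zᵢ + zⱼ‖ = ‖1 + ζ‖` for the root of unity `ζ = zⱼ / zᵢ ≠ 1`.
Writing `ζ = e^{2πik/n}` with `0 < k < n`, `‖1 + ζ‖² = 2 + 2 cos (2πk/n)`, and `2πk/n` lies in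
`[2π/n, 2π - 2π/n]`, where the cosine is largest at the endpoints.
-/

theorem Real.cos_le_cos_of_le_of_le_two_pi_sub {a b : ℝ} (ha : 0 ≤ a) (hab : a ≤ b)
    (hb : b ≤ 2 * π - a) : Real.cos b ≤ Real.cos a := by
  rcases le_total b π with hbπ | hπb
  · exact Real.cos_le_cos_of_nonneg_of_le_pi ha hbπ hab
  · rw [← Real.cos_two_pi_sub b]
    exact Real.cos_le_cos_of_nonneg_of_le_pi ha (by linarith) (by linarith)

theorem Complex.norm_one_add_exp_mul_I_sq (θ : ℝ) :
    ‖1 + exp (θ * I)‖ ^ 2 = 2 + 2 * Real.cos θ := by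
  rw [Complex.sq_norm, exp_mul_I, normSq_apply]
  simp only [add_re, one_re, add_im, one_im, ← ofReal_cos, ← ofReal_sin, ofReal_re, ofReal_im,
    mul_re, mul_im, I_re, I_im]
  nlinarith [Real.sin_sq_add_cos_sq θ]

theorem Complex.norm_one_add_exp_mul_I_le {θ₁ θ₂ : ℝ} (h : Real.cos θ₁ ≤ Real.cos θ₂) :
    ‖1 + exp (θ₁ * I)‖ ≤ ‖1 + exp (θ₂ * I)‖ := by
  rw [← pow_le_pow_iff_left₀ (norm_nonneg _) (norm_nonneg _) two_ne_zero,
    norm_one_add_exp_mul_I_sq, norm_one_add_exp_mul_I_sq]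
  linarith

theorem Complex.norm_one_add_le_of_pow_eq_one {n : ℕ} (hn : n ≠ 0) {ζ : ℂ} (hζ : ζ ^ n = 1)
    (hζ1 : ζ ≠ 1) : ‖1 + ζ‖ ≤ ‖1 + exp (2 * π * I / n)‖ := by
  have : NeZero n := ⟨hn⟩
  obtain ⟨k, hkn, rfl⟩ := (isPrimitiveRoot_exp n hn).eq_pow_of_pow_eq_one hζ
  have hk : k ≠ 0 := by rintro rfl; exact hζ1 (pow_zero _)
  have hexp (j : ℕ) : exp (2 * π * I / n) ^ j = exp ((2 * π * j / n : ℝ) * I) := by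
    rw [← exp_nat_mul]; push_cast; ring_nf
  rw [hexp k, ← pow_one (exp (2 * π * I / n)), hexp 1, Nat.cast_one, mul_one]
  have hn' : (0 : ℝ) < n := by positivity
  have hk1 : (1 : ℝ) ≤ k := by exact_mod_cast Nat.one_le_iff_ne_zero.mpr hk
  have hkn' : (k : ℝ) + 1 ≤ n := by exact_mod_cast hkn
  refine norm_one_add_exp_mul_I_le (Real.cos_le_cos_of_le_of_le_two_pi_sub (by positivity) ?_ ?_)
  · exact div_le_div_of_nonneg_right (le_mul_of_one_le_right (by positivity) hk1) hn'.le
  · rw [div_le_iff₀ hn', sub_mul, div_mul_cancel₀ _ hn'.ne']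
    nlinarith [Real.pi_pos]

theorem Complex.norm_add_le_of_pow_eq_one {n : ℕ} (hn : n ≠ 0) {w z : ℂ} (hw : w ^ n = 1)
    (hz : z ^ n = 1) (hwz : w ≠ z) : ‖w + z‖ ≤ ‖1 + exp (2 * π * I / n)‖ := by
  have hw0 : w ≠ 0 := by rintro rfl; simp [hn] at hw
  have hsplit : w + z = w * (1 + z / w) := by field_simp
  rw [hsplit, norm_mul, norm_eq_one_of_pow_eq_one hw hn, one_mul]
  refine norm_one_add_le_of_pow_eq_one hn (by rw [div_pow, hw, hz, div_one]) ?_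
  rwa [ne_eq, div_eq_one_iff_eq hw0, eq_comm]

theorem norm_sum_le_card_sub_two_add {ι E : Type*} [Fintype ι] [DecidableEq ι]
    [SeminormedAddCommGroup E] {f : ι → E} (hf : ∀ k, ‖f k‖ ≤ 1) {i j : ι} (hij : i ≠ j) :
    ‖∑ k, f k‖ ≤ (Fintype.card ι - 2 : ℝ) + ‖f i + f j‖ := by
  have hcard : (({i, j} : Finset ι)ᶜ.card : ℝ) = Fintype.card ι - 2 := by
    have : 2 ≤ Fintype.card ι := Fintype.one_lt_card_iff.mpr ⟨i, j, hij⟩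
    rw [Finset.card_compl, Finset.card_pair hij, Nat.cast_sub this, Nat.cast_two]
  calc ‖∑ k, f k‖ = ‖∑ k ∈ {i, j}ᶜ, f k + (f i + f j)‖ := by
        rw [← Finset.sum_pair hij, Finset.sum_compl_add_sum]
    _ ≤ ∑ k ∈ {i, j}ᶜ, ‖f k‖ + ‖f i + f j‖ := norm_add_le_of_le (norm_sum_le _ _) le_rfl
    _ ≤ (Fintype.card ι - 2 : ℝ) + ‖f i + f j‖ := by
        gcongr
        exact (Finset.sum_le_card_nsmul _ _ 1 fun k _ => hf k).trans_eq
          (by rw [nsmul_eq_mul, mul_one, hcard])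

/-- Let `n ≥ 2` and let `z₁, …, z_m` be complex `n`-th roots of unity.
If the `zᵢ` are not all equal, then `|∑ᵢ zᵢ| ≤ (m - 2) + |1 + e^{2πi/n}|`. -/
theorem stmt8 (n m : ℕ) (hn : 2 ≤ n) (z : Fin m → ℂ)
    (hz : ∀ i, z i ^ n = 1) (hne : ¬ ∀ i j, z i = z j) :
    ‖∑ i, z i‖ ≤
      ((m : ℝ) - 2) + ‖1 + Complex.exp (2 * Real.pi * Complex.I / n)‖ := by
  push Not at hne
  obtain ⟨i, j, hij⟩ := hne
  have hn0 : n ≠ 0 := by omega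
  have hsum := norm_sum_le_card_sub_two_add (fun k => (norm_eq_one_of_pow_eq_one (hz k) hn0).le)
    (ne_of_apply_ne z hij)
  rw [Fintype.card_fin] at hsum
  exact hsum.trans (by gcongr; exact norm_add_le_of_pow_eq_one hn0 (hz i) (hz j) hij)
end

section
/- Let E be a nonzero finite-dimensional complex inner product space, let m ≥ 1, and let U₁,…,U_m : E → E be unitary linear maps (linear isometric bijections). If the operator norm of (1/m)·∑_{i=1}^{m} Uᵢ equals 1, then there exists a vector v ∈ E with ‖v‖ = 1 such that Uᵢ v = Uⱼ v for all i, j; in particular, every element of the group generated by the maps Uᵢ⁻¹Uⱼ fixes v. -/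
/-!
The operator norm of `A = m⁻¹ ∑ Uᵢ` is attained at a unit vector `v`, so `‖∑ Uᵢ v‖ = m` while
each `Uᵢ v` is a unit vector. This is equality in the triangle inequality, which in a strictly
convex space (such as an inner product space) forces all the `Uᵢ v` to coincide. Then every
`Uᵢ⁻¹ Uⱼ` fixes `v`, hence so does the subgroup they generate.
-/

open Finset Metric

theorem ContinuousLinearMap.exists_norm_eq_one_norm_apply_eq_opNorm {𝕜 E F : Type*} [RCLike 𝕜]
    [NormedAddCommGroup E] [NormedSpace 𝕜 E] [ProperSpace E] [Nontrivial E]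
    [NormedAddCommGroup F] [NormedSpace 𝕜 F] (f : E →L[𝕜] F) : ∃ x, ‖x‖ = 1 ∧ ‖f x‖ = ‖f‖ := by
  have hsphere : (sphere (0 : E) 1).Nonempty :=
    Set.nonempty_coe_sort.1 (NormedSpace.sphere_nonempty_rclike 𝕜 zero_le_one)
  obtain ⟨x, hx, hfx⟩ := ((isCompact_sphere (0 : E) 1).image (by fun_prop)).sSup_mem
    (hsphere.image fun x ↦ ‖f x‖)
  exact ⟨x, mem_sphere_zero_iff_norm.1 hx, hfx.trans f.sSup_sphere_eq_norm⟩

theorem eq_of_norm_sum_eq_card_mul {ι E : Type*} [NormedAddCommGroup E] [NormedSpace ℝ E]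
    [StrictConvexSpace ℝ E] [DecidableEq ι] {s : Finset ι} {x : ι → E} {r : ℝ}
    (hx : ∀ i ∈ s, ‖x i‖ = r) (hsum : ‖∑ i ∈ s, x i‖ = #s * r) {i j : ι} (hi : i ∈ s)
    (hj : j ∈ s) : x i = x j := by
  obtain rfl | hij := eq_or_ne i j
  · rfl
  have hjt : j ∈ s.erase i := mem_erase.2 ⟨hij.symm, hj⟩
  have hcard : (#s : ℝ) = #((s.erase i).erase j) + 2 := by
    have h₁ := card_erase_add_one hjt
    have h₂ := card_erase_add_one hi
    exact_mod_cast (show #s = #((s.erase i).erase j) + 2 by omega)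
  set t := (s.erase i).erase j
  have hsplit : ∑ k ∈ s, x k = x i + x j + ∑ k ∈ t, x k := by
    rw [add_assoc, add_sum_erase _ _ hjt, add_sum_erase _ _ hi]
  have ht : ‖∑ k ∈ t, x k‖ ≤ #t * r := by
    refine (norm_sum_le _ _).trans_eq ?_
    rw [sum_congr rfl fun k hk ↦ hx k (mem_of_mem_erase (mem_of_mem_erase hk)), sum_const,
      nsmul_eq_mul]
  -- The other summands contribute at most `#t * r`, so `x i + x j` must make up `2 * r`.
  have hpair : ‖x i + x j‖ = ‖x i‖ + ‖x j‖ := by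
    refine le_antisymm (norm_add_le _ _) ?_
    have := norm_add_le (x i + x j) (∑ k ∈ t, x k)
    rw [← hsplit, hsum, hcard] at this
    rw [hx i hi, hx j hj]
    linarith
  exact eq_of_norm_eq_of_norm_add_eq ((hx i hi).trans (hx j hj).symm) hpair

theorem LinearIsometryEquiv.apply_eq_self_of_mem_closure {R E : Type*} [Semiring R]
    [SeminormedAddCommGroup E] [Module R E] {S : Set (E ≃ₗᵢ[R] E)} {v : E}
    (hS : ∀ w ∈ S, w v = v) {W : E ≃ₗᵢ[R] E} (hW : W ∈ Subgroup.closure S) : W v = v := by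
  induction hW using Subgroup.closure_induction with
  | mem w hw => exact hS w hw
  | one => rfl
  | mul a b _ _ ha hb => rw [coe_mul, Function.comp_apply, hb, ha]
  | inv a _ ha => rw [coe_inv, symm_apply_eq, ha]

/-- Let `E` be a nonzero finite-dimensional complex inner product space,
`m ≥ 1`, and `U₁, …, U_m` unitary maps on `E`. If `‖(1/m) ∑ᵢ Uᵢ‖ = 1` (operator norm),
then there is a unit vector `v` with `Uᵢ v = Uⱼ v` for all `i, j`; in particular every
element of the subgroup generated by the `Uᵢ⁻¹ Uⱼ` fixes `v`. -/
theorem stmt11 {E : Type*} [NormedAddCommGroup E] [InnerProductSpace ℂ E]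
    [FiniteDimensional ℂ E] [Nontrivial E]
    (m : ℕ) (hm : 1 ≤ m) (U : Fin m → (E ≃ₗᵢ[ℂ] E))
    (hnorm : ‖(m : ℂ)⁻¹ • ∑ i, ((U i).toLinearIsometry.toContinuousLinearMap)‖ = 1) :
    ∃ v : E, ‖v‖ = 1 ∧ (∀ i j, U i v = U j v) ∧
      ∀ W ∈ Subgroup.closure {w : E ≃ₗᵢ[ℂ] E | ∃ i j, w = (U i)⁻¹ * (U j)},
        W v = v := by
  obtain ⟨v, hv, hAv⟩ := ContinuousLinearMap.exists_norm_eq_one_norm_apply_eq_opNorm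
    ((m : ℂ)⁻¹ • ∑ i, ((U i).toLinearIsometry.toContinuousLinearMap))
  have hsum : ‖∑ i, U i v‖ = m := by
    have hm₀ : (m : ℝ) ≠ 0 := Nat.cast_ne_zero.2 (by omega)
    rw [hnorm, smul_apply, _root_.sum_apply, norm_smul, norm_inv, Complex.norm_natCast,
      inv_mul_eq_one₀ hm₀] at hAv
    exact hAv.symm
  have : StrictConvexSpace ℝ E := by
    let := InnerProductSpace.complexToReal (G := E)
    infer_instance
  have hUv : ∀ i j, U i v = U j v := fun i j ↦
    eq_of_norm_sum_eq_card_mul (x := fun i ↦ U i v) (r := 1) (fun i _ ↦ by simp [hv])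
      (by simpa using hsum) (mem_univ i) (mem_univ j)
  refine ⟨v, hv, hUv, fun W ↦ LinearIsometryEquiv.apply_eq_self_of_mem_closure ?_⟩
  rintro _ ⟨i, j, rfl⟩
  rw [LinearIsometryEquiv.coe_mul, Function.comp_apply, LinearIsometryEquiv.coe_inv, ← hUv i j,
    LinearIsometryEquiv.symm_apply_apply]
end

section
/- Let G be a finite group and S ⊆ G a nonempty subset such that the subgroup of G generated by {s⁻¹t : s, t ∈ S} contains the commutator subgroup [G,G]. Let ρ be an irreducible unitary representation of G on a finite-dimensional complex inner product space V with dim V ≥ 2 (so each ρ(g) is a unitary map on V). Then the operator norm of (1/|S|)·∑_{s ∈ S} ρ(s⁻¹) is strictly less than 1. -/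
/-!
If the average `T` of the `ρ(s⁻¹)` had norm `1`, it would attain it at some `x ≠ 0` with
`‖x‖ ≤ 1`; by strict convexity the vectors `ρ(s⁻¹) x` then all coincide, so `w = ρ(s₀⁻¹) x` is
fixed by every `s⁻¹ t`, hence by `[G,G]`. The `[G,G]`-fixed vectors form a nonzero
subrepresentation, so `[G,G]` acts trivially, `ρ` factors through the abelianization, and Schur's
lemma forces `dim V = 1`.
-/

open Module

theorem ContinuousLinearMap.exists_norm_le_one_norm_apply_eq_opNorm {𝕜 E F : Type*} [RCLike 𝕜]
    [NormedAddCommGroup E] [NormedSpace 𝕜 E] [ProperSpace E] [NormedAddCommGroup F]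
    [NormedSpace 𝕜 F] (f : E →L[𝕜] F) : ∃ x : E, ‖x‖ ≤ 1 ∧ ‖f x‖ = ‖f‖ := by
  have hK : IsCompact ((fun x => ‖f x‖) '' Metric.closedBall 0 1) :=
    (isCompact_closedBall 0 1).image (by fun_prop)
  obtain ⟨x, hx, hfx⟩ := hK.sSup_mem ((Metric.nonempty_closedBall.2 zero_le_one).image _)
  exact ⟨x, mem_closedBall_zero_iff.1 hx, hfx.trans f.sSup_unitClosedBall_eq_norm⟩

theorem LinearIsometry.exists_ne_zero_forall_eq_of_one_le_norm_average {𝕜 E F ι : Type*}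
    [RCLike 𝕜] [NormedAddCommGroup E] [NormedSpace 𝕜 E] [ProperSpace E] [NormedAddCommGroup F]
    [NormedSpace 𝕜 F] [NormedSpace ℝ F] [IsScalarTower ℝ 𝕜 F] [StrictConvexSpace ℝ F]
    (S : Finset ι) (A : ι → E →ₗᵢ[𝕜] F)
    (h : 1 ≤ ‖(S.card : 𝕜)⁻¹ • ∑ i ∈ S, (A i).toContinuousLinearMap‖) :
    ∃ x ≠ 0, ∀ i ∈ S, ∀ j ∈ S, A i x = A j x := by
  set T := (S.card : 𝕜)⁻¹ • ∑ i ∈ S, (A i).toContinuousLinearMap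
  obtain ⟨x, hx1, hTx⟩ := T.exists_norm_le_one_norm_apply_eq_opNorm
  have hx0 : x ≠ 0 := by
    rintro rfl
    simp only [map_zero, norm_zero] at hTx
    linarith
  refine ⟨x, hx0, fun i hi j hj => by_contra fun hij => ?_⟩
  have hS : (S.card : ℝ) ≠ 0 := Nat.cast_ne_zero.2 (Finset.card_ne_zero_of_mem hi)
  have hTx_eq : T x = ∑ k ∈ S, (S.card : ℝ)⁻¹ • A k x := by
    simp [T, ← Finset.smul_sum, ← algebraMap_smul 𝕜 (S.card : ℝ)⁻¹]
  have : ‖T x‖ < ‖x‖ := hTx_eq ▸ norm_sum_lt_of_strictConvexSpace (fun _ _ => by positivity)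
    (by simp [hS]) hi hj hij (by positivity) (by positivity) fun k _ => (A k).norm_map x |>.le
  linarith

namespace Representation

variable {k G V : Type*} [Field k] [Group G] [AddCommGroup V] [Module k V]
  (ρ : Representation k G V)

theorem apply_eq_self_of_mem_closure {s : Set G} {v : V} (hs : ∀ g ∈ s, ρ g v = v) {g : G}
    (hg : g ∈ Subgroup.closure s) : ρ g v = v := by
  induction hg using Subgroup.closure_induction with
  | mem g hg => exact hs g hg
  | one => simp
  | mul g h _ _ hg hh => rw [map_mul, Module.End.mul_apply, hh, hg]
  | inv g _ hg =>
    rw [← hg, ← Module.End.mul_apply, ← map_mul, inv_mul_cancel, map_one, hg,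
      Module.End.one_apply]

theorem isIrreducible_of_forall_invariant [Nontrivial V]
    (h : ∀ W : Submodule k V, (∀ g, ∀ v ∈ W, ρ g v ∈ W) → W = ⊥ ∨ W = ⊤) : ρ.IsIrreducible where
  exists_pair_ne := ⟨⊥, ⊤, fun h' => bot_ne_top congr(($h').toSubmodule)⟩
  eq_bot_or_eq_top σ := (h σ.toSubmodule fun g _ hv => σ.apply_mem_toSubmodule g hv).imp
    (Subrepresentation.toSubmodule_injective ·) (Subrepresentation.toSubmodule_injective ·)

def subrepresentationCompOrderIso {H : Type*} [Group H] {f : H →* G}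
    (hf : Function.Surjective f) : Subrepresentation (ρ.comp f) ≃o Subrepresentation ρ where
  toFun σ := ⟨σ.toSubmodule, fun g => by
    obtain ⟨h, rfl⟩ := hf g
    exact σ.apply_mem_toSubmodule h⟩
  invFun σ := ⟨σ.toSubmodule, fun h => σ.apply_mem_toSubmodule (f h)⟩
  left_inv _ := rfl
  right_inv _ := rfl
  map_rel_iff' := Iff.rfl

theorem isIrreducible_comp_iff {H : Type*} [Group H] {f : H →* G}
    (hf : Function.Surjective f) : IsIrreducible (ρ.comp f) ↔ ρ.IsIrreducible :=
  (ρ.subrepresentationCompOrderIso hf).isSimpleOrder_iff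

namespace IsIrreducible

variable [ρ.IsIrreducible]

theorem isTrivial_of_apply_eq_self (N : Subgroup G) [N.Normal] {v : V} (hv : v ≠ 0)
    (hfix : ∀ n ∈ N, ρ n v = v) : IsTrivial (ρ.comp N.subtype) := by
  let σ : Subrepresentation ρ := ⟨invariants (ρ.comp N.subtype), ρ.le_comap_invariants N⟩
  have hσ : σ = ⊤ := (eq_bot_or_eq_top σ).resolve_left fun hbot => hv <| by
    have hvσ : v ∈ σ.toSubmodule := (mem_invariants _ v).2 fun n => hfix n n.2
    rw [hbot] at hvσ
    exact (Submodule.mem_bot k).1 hvσ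
  refine ⟨fun n => LinearMap.ext fun u => ?_⟩
  have hu : u ∈ σ.toSubmodule := hσ ▸ Submodule.mem_top
  exact (mem_invariants _ u).1 hu n

theorem finrank_eq_one_of_isTrivial_commutator [IsAlgClosed k] [FiniteDimensional k V]
    [IsTrivial (ρ.comp (commutator G).subtype)] : finrank k V = 1 := by
  have : (ρ.ofQuotient (commutator G)).IsIrreducible :=
    (isIrreducible_comp_iff _ (QuotientGroup.mk'_surjective (commutator G))).1 ‹_›
  have : IsMulCommutative (G ⧸ commutator G) :=
    inferInstanceAs (IsMulCommutative (Abelianization G))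
  exact finrank_eq_one_of_isMulCommutative (ρ.ofQuotient (commutator G))

end IsIrreducible

end Representation

def LinearIsometryEquiv.toLinearMapMonoidHom {R E : Type*} [Semiring R]
    [SeminormedAddCommGroup E] [Module R E] : (E ≃ₗᵢ[R] E) →* (E →ₗ[R] E) where
  toFun e := e.toLinearEquiv.toLinearMap
  map_one' := rfl
  map_mul' _ _ := rfl

theorem stmt14_general {G : Type*} [Group G]
    (S : Finset G) (hS : S.Nonempty)
    (hgen : commutator G ≤
      Subgroup.closure {x : G | ∃ s ∈ S, ∃ t ∈ S, x = s⁻¹ * t})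
    {V : Type*} [NormedAddCommGroup V] [InnerProductSpace ℂ V] [FiniteDimensional ℂ V]
    (ρ : G →* (V ≃ₗᵢ[ℂ] V))
    (hirr : ∀ W : Submodule ℂ V, (∀ g : G, ∀ v ∈ W, ρ g v ∈ W) → W = ⊥ ∨ W = ⊤)
    (hdim : 2 ≤ Module.finrank ℂ V) :
    ‖((S.card : ℂ))⁻¹ • ∑ s ∈ S, ((ρ s⁻¹).toLinearIsometry.toContinuousLinearMap)‖ < 1 := by
  have : Nontrivial V := nontrivial_of_finrank_pos (R := ℂ) (by omega)
  -- makes `V` a strictly convex real normed space; instance search does not find this itself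
  have := InnerProductSpace.toInnerProductSpaceable ℂ (E := V)
  let ρL : Representation ℂ G V := LinearIsometryEquiv.toLinearMapMonoidHom.comp ρ
  have := ρL.isIrreducible_of_forall_invariant hirr
  refine lt_of_not_ge fun h => ?_
  obtain ⟨v, hv, hconst⟩ :=
    LinearIsometry.exists_ne_zero_forall_eq_of_one_le_norm_average S _ h
  obtain ⟨s₀, hs₀⟩ := hS
  have hfix : ∀ g ∈ commutator G, ρL g (ρ s₀⁻¹ v) = ρ s₀⁻¹ v := by
    refine fun g hg => ρL.apply_eq_self_of_mem_closure ?_ (hgen hg)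
    rintro _ ⟨s, hs, t, ht, rfl⟩
    simp only [LinearIsometryEquiv.coe_toLinearIsometry] at hconst
    change ρ (s⁻¹ * t) (ρ s₀⁻¹ v) = ρ s₀⁻¹ v
    rw [hconst s₀ hs₀ t ht, ← Function.comp_apply (f := ρ (s⁻¹ * t)),
      ← LinearIsometryEquiv.coe_mul, ← map_mul, mul_inv_cancel_right, hconst s hs t ht]
  have := Representation.IsIrreducible.isTrivial_of_apply_eq_self ρL (commutator G)
    (by simpa using hv) hfix
  have := Representation.IsIrreducible.finrank_eq_one_of_isTrivial_commutator ρL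
  omega

/-- Let `G` be a finite group and `S ⊆ G` nonempty such that the
subgroup generated by `{s⁻¹t : s, t ∈ S}` contains `[G,G]`. Let `ρ` be an irreducible
unitary representation of `G` on a finite-dimensional complex inner product space `V`
with `dim V ≥ 2`. Then `‖(1/|S|) ∑_{s ∈ S} ρ(s⁻¹)‖ < 1` in the operator norm. -/
theorem stmt14 {G : Type*} [Group G] [Fintype G] [DecidableEq G]
    (S : Finset G) (hS : S.Nonempty)
    (hgen : commutator G ≤
      Subgroup.closure {x : G | ∃ s ∈ S, ∃ t ∈ S, x = s⁻¹ * t})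
    {V : Type*} [NormedAddCommGroup V] [InnerProductSpace ℂ V] [FiniteDimensional ℂ V]
    (ρ : G →* (V ≃ₗᵢ[ℂ] V))
    (hirr : ∀ W : Submodule ℂ V, (∀ g : G, ∀ v ∈ W, ρ g v ∈ W) → W = ⊥ ∨ W = ⊤)
    (hdim : 2 ≤ Module.finrank ℂ V) :
    ‖((S.card : ℂ))⁻¹ • ∑ s ∈ S, ((ρ s⁻¹).toLinearIsometry.toContinuousLinearMap)‖ < 1 :=
  stmt14_general S hS hgen ρ hirr hdim
end
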